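/- Let f : Γ → Δ be a surjective group homomorphism, and suppose b₁(Γ) and b₁(Δ) are finite. Then for every finite-index subgroup Δ' of Δ, the preimage Γ' = f⁻¹(Δ') is a finite-index subgroup of Γ satisfying b₁(Γ') + b₁(Δ) ≥ b₁(Δ') + b₁(Γ). (In particular, vb₁(Γ) − b₁(Γ) ≥ vb₁(Δ) − b₁(Δ), where vb₁ denotes the supremum of b₁ over all finite-index subgroups.) -/

import Mathlib

open scoped TensorProduct

/-- First homology of a group with ℚ-coefficients: `ℚ ⊗_ℤ G^{ab}`. -/
abbrev QH1 (G : Type*) [Group G] : Type _ :=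
  ℚ ⊗[ℤ] Additive (Abelianization G)

/-- The ℚ-linear map on first homology induced by a group homomorphism. -/
noncomputable def inducedMap {G H : Type*} [Group G] [Group H] (f : G →* H) :
    QH1 G →ₗ[ℚ] QH1 H :=
  LinearMap.baseChange ℚ
    (MonoidHom.toAdditive (Abelianization.map f)).toIntLinearMap

/-- The ℚ-linear map on first homology induced by the transfer homomorphism
`G → H^{ab}` of a finite-index subgroup `H ≤ G`. -/
noncomputable def transferMap {G : Type*} [Group G] (H : Subgroup G) [H.FiniteIndex] :
    QH1 G →ₗ[ℚ] QH1 H :=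
  LinearMap.baseChange ℚ
    (MonoidHom.toAdditive
      (Abelianization.lift (MonoidHom.transfer (Abelianization.of : H →* Abelianization H)))).toIntLinearMap

universe u

/-! Tensoring with `ℚ` is right exact, so `H₁(ker f) → H₁(Γ) → H₁(Δ) → 0` stays exact with
rational coefficients. Since `ker f ≤ Γ'` and `f` restricts to a surjection `Γ' → Δ'`, the kernel
of `H₁(Γ) → H₁(Δ)` is the image of a subspace of the kernel of `H₁(Γ') → H₁(Δ')`, whence
`b₁(Γ) - b₁(Δ) ≤ b₁(Γ') - b₁(Δ')`. -/

open Function LinearMap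

namespace Abelianization

variable {G H : Type*} [Group G] [Group H] {f : G →* H}

lemma map_surjective (hf : Surjective f) : Surjective (map f) := fun x =>
  QuotientGroup.induction_on x fun h => by
    obtain ⟨a, rfl⟩ := hf h
    exact ⟨of a, rfl⟩

lemma mulExact_map_ker_subtype (hf : Surjective f) : MulExact (map f.ker.subtype) (map f) := by
  refine MonoidHom.mulExact_of_comp_of_mem_range (by ext ⟨k, hk⟩; simp [MonoidHom.mem_ker.mp hk])
    fun y => QuotientGroup.induction_on y fun a ha => ?_
  change map f (of a) = 1 at ha
  rw [map_of, ← MonoidHom.mem_ker, ker_of, commutator_def,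
    ← MonoidHom.range_eq_top_of_surjective f hf, ← map_commutator_eq] at ha
  obtain ⟨c, hc, hca⟩ := ha
  have hc1 : of c = 1 := by rwa [← MonoidHom.mem_ker, ker_of]
  refine ⟨of ⟨c⁻¹ * a, by simp [hca]⟩, ?_⟩
  rw [map_of, Subgroup.coe_subtype, Subgroup.coe_mk, map_mul, map_inv, hc1,
    inv_one, one_mul]
  rfl

end Abelianization

section QH1

variable {G H K : Type*} [Group G] [Group H] [Group K] {f : G →* H}

lemma inducedMap_comp (g : H →* K) (f : G →* H) :
    inducedMap (g.comp f) = inducedMap g ∘ₗ inducedMap f := by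
  rw [inducedMap, inducedMap, inducedMap, ← baseChange_comp, ← Abelianization.map_comp]
  rfl

lemma inducedMap_one : inducedMap (1 : G →* H) = 0 := by
  have : Abelianization.map (1 : G →* H) = 1 := by ext; simp
  rw [inducedMap, this, ← baseChange_zero]
  rfl

lemma inducedMap_surjective (hf : Surjective f) : Surjective (inducedMap f) := by
  rw [inducedMap, baseChange_eq_ltensor]
  exact lTensor_surjective ℚ (Abelianization.map_surjective hf)

lemma exact_inducedMap_ker_subtype (hf : Surjective f) :
    Exact (inducedMap f.ker.subtype) (inducedMap f) := by
  rw [inducedMap, inducedMap, baseChange_eq_ltensor, baseChange_eq_ltensor]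
  exact lTensor_exact ℚ (Abelianization.mulExact_map_ker_subtype hf)
    (Abelianization.map_surjective hf)

lemma ker_inducedMap_le_map_ker_subgroupComap (hf : Surjective f) (L : Subgroup H) :
    ker (inducedMap f) ≤
      (ker (inducedMap (f.subgroupComap L))).map (inducedMap (L.comap f).subtype) := by
  let j : f.ker →* L.comap f := Subgroup.inclusion (f.ker_le_comap L)
  have hfj : (f.subgroupComap L).comp j = 1 := by
    ext ⟨k, hk⟩
    exact hk
  rw [(exact_inducedMap_ker_subtype hf).linearMap_ker_eq,
    show f.ker.subtype = (L.comap f).subtype.comp j from rfl, inducedMap_comp, range_comp]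
  refine Submodule.map_mono (range_le_ker_iff.mpr ?_)
  rw [← inducedMap_comp, hfj, inducedMap_one]

end QH1

theorem rank_QH1_add_le_rank_QH1_comap_add {G H : Type u} [Group G] [Group H] {f : G →* H}
    (hf : Surjective f) (L : Subgroup H) :
    Module.rank ℚ (QH1 L) + Module.rank ℚ (QH1 G) ≤
      Module.rank ℚ (QH1 (L.comap f)) + Module.rank ℚ (QH1 H) := by
  have hf' := f.subgroupComap_surjective_of_surjective L hf
  calc Module.rank ℚ (QH1 L) + Module.rank ℚ (QH1 G)
      = Module.rank ℚ (QH1 L) +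
          (Module.rank ℚ (range (inducedMap f)) + Module.rank ℚ (ker (inducedMap f))) := by
        rw [rank_range_add_rank_ker]
    _ ≤ Module.rank ℚ (QH1 L) +
          (Module.rank ℚ (QH1 H) + Module.rank ℚ (ker (inducedMap (f.subgroupComap L)))) := by
        gcongr
        · exact Submodule.rank_le _
        · exact (Submodule.rank_mono (ker_inducedMap_le_map_ker_subgroupComap hf L)).trans
            (rank_map_le _ _)
    _ = Module.rank ℚ (QH1 (L.comap f)) + Module.rank ℚ (QH1 H) := by
        rw [rank_eq_of_surjective (inducedMap_surjective hf')]
        ring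

theorem stmt6_general {Γ Δ : Type u} [Group Γ] [Group Δ] (f : Γ →* Δ)
    (hf : Function.Surjective f)
    (Δ' : Subgroup Δ) [Δ'.FiniteIndex] :
    (Δ'.comap f).FiniteIndex ∧
      Module.rank ℚ (QH1 Δ') + Module.rank ℚ (QH1 Γ) ≤
        Module.rank ℚ (QH1 (Δ'.comap f)) + Module.rank ℚ (QH1 Δ) :=
  ⟨⟨by rw [Subgroup.index_comap_of_surjective _ hf]; exact Subgroup.FiniteIndex.index_ne_zero⟩,
    rank_QH1_add_le_rank_QH1_comap_add hf Δ'⟩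

theorem stmt6 {Γ Δ : Type u} [Group Γ] [Group Δ] (f : Γ →* Δ)
    (hf : Function.Surjective f)
    [FiniteDimensional ℚ (QH1 Γ)] [FiniteDimensional ℚ (QH1 Δ)]
    (Δ' : Subgroup Δ) [Δ'.FiniteIndex] :
    (Δ'.comap f).FiniteIndex ∧
      Module.rank ℚ (QH1 Δ') + Module.rank ℚ (QH1 Γ) ≤
        Module.rank ℚ (QH1 (Δ'.comap f)) + Module.rank ℚ (QH1 Δ) :=
  stmt6_general f hf Δ'
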